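/- arXiv:1801.08960 — 2 statements merged into one kernel-verified Lean document; each statement's English description precedes it below -/
import Mathlib

section
/- Let x' = A(t)x be uniformly asymptotically stable with ‖Φ(t,s)‖ ≤ K e^{-α(t-s)} for t ≥ s ≥ 0 and sup ‖A(t)‖ = M. Given a continuous symmetric matrix function Q(t) with q⁻ I ≤ Q(t) ≤ q⁺ I for constants 0 < q⁻ ≤ q⁺, define P(t) = ∫_t^∞ Φ(τ,t)ᵀ Q(τ) Φ(τ,t) dτ. Then P(t) is well defined, symmetric, satisfies (q⁻/2M) I ≤ P(t) ≤ (K²q⁺/2α) I for all t ≥ 0, and −Ṗ(t) = A(t)ᵀP(t) + P(t)A(t) + Q(t). -/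
/-!
Since `Φ(τ,t) = Φ(τ,0) Φ(0,t)`, the operator is `P(t) = Φ(0,t)ᵀ R(t) Φ(0,t)` with
`R(t) = ∫_t^∞ Φ(τ,0)ᵀ Q(τ) Φ(τ,0) dτ` the tail integral of one fixed integrable function, so
`R' = -Φ(t,0)ᵀ Q(t) Φ(t,0)`; the Lyapunov equation is then the product rule together with
`∂ₜ Φ(0,t) = -Φ(0,t) A(t)`. The quadratic form `⟨x, P(t) x⟩ = ∫_t^∞ ⟨Φ(τ,t)x, Q(τ) Φ(τ,t)x⟩ dτ`
is bounded above through the exponential decay of `Φ`, and below because `‖A‖ ≤ M` makes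
`e^{2Mτ} ‖Φ(τ,t)x‖²` nondecreasing in `τ`.
-/

open Real MeasureTheory Filter Topology

open Set
open scoped InnerProduct RealInnerProductSpace

theorem integrableOn_exp_neg_mul_sub_Ioi (t : ℝ) {b : ℝ} (hb : 0 < b) :
    IntegrableOn (fun τ => exp (-b * (τ - t))) (Ioi t) := by
  refine IntegrableOn.congr_fun ((exp_neg_integrableOn_Ioi t hb).mul_const (exp (b * t)))
    (fun τ _ => ?_) measurableSet_Ioi
  rw [← exp_add]; ring_nf

theorem integral_exp_neg_mul_sub_Ioi (t : ℝ) {b : ℝ} (hb : 0 < b) :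
    ∫ τ in Ioi t, exp (-b * (τ - t)) = b⁻¹ := by
  have hsplit : (fun τ => exp (-b * (τ - t))) = fun τ => exp (-b * τ) * exp (b * t) := by
    funext τ; rw [← exp_add]; ring_nf
  rw [hsplit, integral_mul_const, integral_exp_mul_Ioi (neg_lt_zero.2 hb), div_mul_eq_mul_div,
    neg_mul, ← exp_add]
  simp

theorem MeasureTheory.IntegrableOn.Ioi_of_continuous {F : Type*} [NormedAddCommGroup F]
    {G : ℝ → F} (hG : Continuous G) {a : ℝ} (h : IntegrableOn G (Ioi a)) (b : ℝ) :
    IntegrableOn G (Ioi b) :=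
  ((hG.integrableOn_Icc (a := b) (b := a)).union h).mono_set fun x hx => by
    rcases le_or_gt x a with hxa | hxa
    exacts [Or.inl ⟨le_of_lt hx, hxa⟩, Or.inr hxa]

theorem hasDerivAt_setIntegral_Ioi {F : Type*} [NormedAddCommGroup F] [NormedSpace ℝ F]
    [CompleteSpace F] {G : ℝ → F} (hG : Continuous G) {a : ℝ} (h : IntegrableOn G (Ioi a))
    (t : ℝ) : HasDerivAt (fun s => ∫ τ in Ioi s, G τ) (-G t) t := by
  have htail :
      (fun s => ∫ τ in Ioi s, G τ) = fun s => (∫ τ in Ioi a, G τ) - ∫ τ in a..s, G τ := by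
    funext s
    rw [← intervalIntegral.integral_Ioi_sub_Ioi' h (h.Ioi_of_continuous hG s), sub_sub_cancel]
  rw [htail]
  simpa using (hG.integral_hasStrictDerivAt a t).hasDerivAt.const_sub _

theorem div_le_setIntegral_Ioi_of_mul_exp_le {f : ℝ → ℝ} {t b c : ℝ} (hb : 0 < b)
    (hf : IntegrableOn f (Ioi t)) (h : ∀ τ ∈ Ioi t, c * exp (-b * (τ - t)) ≤ f τ) :
    c / b ≤ ∫ τ in Ioi t, f τ := by
  have hmono := setIntegral_mono_on ((integrableOn_exp_neg_mul_sub_Ioi t hb).const_mul c) hf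
    measurableSet_Ioi h
  rwa [integral_const_mul, integral_exp_neg_mul_sub_Ioi t hb] at hmono

theorem setIntegral_Ioi_le_div_of_le_mul_exp {f : ℝ → ℝ} {t b c : ℝ} (hb : 0 < b)
    (hf : IntegrableOn f (Ioi t)) (h : ∀ τ ∈ Ioi t, f τ ≤ c * exp (-b * (τ - t))) :
    ∫ τ in Ioi t, f τ ≤ c / b := by
  have hmono := setIntegral_mono_on hf ((integrableOn_exp_neg_mul_sub_Ioi t hb).const_mul c)
    measurableSet_Ioi h
  rwa [integral_const_mul, integral_exp_neg_mul_sub_Ioi t hb] at hmono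

theorem exp_neg_mul_mul_norm_sq_le_of_hasDerivAt {E : Type*} [NormedAddCommGroup E]
    [InnerProductSpace ℝ E] {y : ℝ → E} {B : ℝ → E →L[ℝ] E} {M t₀ τ : ℝ}
    (hy : ∀ s, HasDerivAt y (B s (y s)) s) (hB : ∀ s, t₀ ≤ s → ‖B s‖ ≤ M) (hτ : t₀ ≤ τ) :
    exp (-(2 * M) * (τ - t₀)) * ‖y t₀‖ ^ 2 ≤ ‖y τ‖ ^ 2 := by
  set h : ℝ → ℝ := fun s => exp (2 * M * s) * ‖y s‖ ^ 2
  have hderiv : ∀ s, HasDerivAt h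
      (2 * M * exp (2 * M * s) * ‖y s‖ ^ 2 + exp (2 * M * s) * (2 * ⟪y s, B s (y s)⟫)) s :=
    fun s => (((hasDerivAt_id s).const_mul (2 * M)).exp.mul (hy s).norm_sq).congr_deriv
      (by simp only [id, mul_one]; ring)
  have hmono : MonotoneOn h (Ici t₀) := by
    refine monotoneOn_of_hasDerivWithinAt_nonneg (convex_Ici t₀)
      (HasDerivAt.continuousOn fun s _ => hderiv s) (fun s _ => (hderiv s).hasDerivWithinAt)
      fun s hs => ?_
    rw [interior_Ici] at hs
    have hinner : -(M * ‖y s‖ ^ 2) ≤ ⟪y s, B s (y s)⟫ := by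
      refine neg_le_of_abs_le ((abs_real_inner_le_norm _ _).trans ?_)
      calc ‖y s‖ * ‖B s (y s)‖ ≤ ‖y s‖ * (M * ‖y s‖) := by
            gcongr; exact (B s).le_of_opNorm_le (hB s (le_of_lt hs)) _
        _ = M * ‖y s‖ ^ 2 := by ring
    nlinarith [exp_pos (2 * M * s)]
  calc exp (-(2 * M) * (τ - t₀)) * ‖y t₀‖ ^ 2 = exp (-(2 * M) * τ) * h t₀ := by
        simp only [h, ← mul_assoc, ← exp_add]; ring_nf
    _ ≤ exp (-(2 * M) * τ) * h τ := by gcongr; exact hmono self_mem_Ici hτ hτ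
    _ = ‖y τ‖ ^ 2 := by simp only [h, ← mul_assoc, ← exp_add]; ring_nf; simp

theorem hasDerivAt_clm_of_forall_apply {E F : Type*} [NormedAddCommGroup E] [NormedSpace ℝ E]
    [FiniteDimensional ℝ E] [NormedAddCommGroup F] [NormedSpace ℝ F]
    {f : ℝ → E →L[ℝ] F} {f' : E →L[ℝ] F} {t : ℝ}
    (h : ∀ v, HasDerivAt (fun r => f r v) (f' v) t) : HasDerivAt f f' t := by
  let e : (E →L[ℝ] F) ≃L[ℝ] Fin (Module.finrank ℝ E) → F :=
    ((ContinuousLinearEquiv.ofFinrankEq (Module.finrank_fin_fun ℝ).symm).arrowCongr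
      (1 : F ≃L[ℝ] F)).trans (ContinuousLinearEquiv.piRing _)
  have he : HasDerivAt (fun r => e (f r)) (e f') t := hasDerivAt_pi.2 fun i => h _
  simpa [Function.comp_def] using e.symm.hasFDerivAt.comp_hasDerivAt t he

theorem ContinuousLinearMap.norm_le_of_abs_inner_self_le {E : Type*} [NormedAddCommGroup E]
    [InnerProductSpace ℝ E] {T : E →L[ℝ] E} (hT : T.IsSymmetric) {c : ℝ} (hc : 0 ≤ c)
    (h : ∀ x, |⟪T x, x⟫| ≤ c * ‖x‖ ^ 2) : ‖T‖ ≤ c := by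
  rw [T.norm_eq_iSup_rayleighQuotient hT]
  refine ciSup_le fun x => ?_
  rcases eq_or_ne x 0 with rfl | hx
  · simpa using hc
  · rw [rayleighQuotient, reApplyInnerSelf_apply, RCLike.re_to_real, abs_div, abs_sq,
      div_le_iff₀ (by positivity)]
    exact h x

section AdjointConj

variable {E F : Type*} [NormedAddCommGroup E] [InnerProductSpace ℝ E] [CompleteSpace E]
  [NormedAddCommGroup F] [InnerProductSpace ℝ F] [CompleteSpace F]

noncomputable def adjointConjL (S : E →L[ℝ] F) : (F →L[ℝ] F) →L[ℝ] E →L[ℝ] E :=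
  (ContinuousLinearMap.compL ℝ E F E (S†)).comp ((ContinuousLinearMap.compL ℝ E F F).flip S)

@[simp]
theorem adjointConjL_apply (S : E →L[ℝ] F) (T : F →L[ℝ] F) :
    adjointConjL S T = S† ∘L T ∘L S := rfl

theorem adjointConjL_comp {G : Type*} [NormedAddCommGroup G] [InnerProductSpace ℝ G]
    [CompleteSpace G] (S₁ : F →L[ℝ] G) (S₂ : E →L[ℝ] F) (T : G →L[ℝ] G) :
    adjointConjL (S₁ ∘L S₂) T = adjointConjL S₂ (adjointConjL S₁ T) := by
  simp [ContinuousLinearMap.adjoint_comp, ContinuousLinearMap.comp_assoc]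

theorem norm_adjointConjL_apply_le (S : E →L[ℝ] F) (T : F →L[ℝ] F) :
    ‖adjointConjL S T‖ ≤ ‖T‖ * ‖S‖ ^ 2 := by
  calc ‖adjointConjL S T‖ ≤ ‖S†‖ * (‖T‖ * ‖S‖) :=
        (ContinuousLinearMap.opNorm_comp_le _ _).trans
          (mul_le_mul_of_nonneg_left (ContinuousLinearMap.opNorm_comp_le _ _) (norm_nonneg _))
    _ = ‖T‖ * ‖S‖ ^ 2 := by rw [LinearIsometryEquiv.norm_map]; ring

theorem inner_adjointConjL_apply (S : E →L[ℝ] F) (T : F →L[ℝ] F) (x y : E) :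
    ⟪adjointConjL S T x, y⟫ = ⟪T (S x), S y⟫ := by
  simp [ContinuousLinearMap.adjoint_inner_left]

theorem isSymmetric_adjointConjL (S : E →L[ℝ] F) {T : F →L[ℝ] F} (hT : T.IsSymmetric) :
    (adjointConjL S T).IsSymmetric := fun x y => by
  simp only [ContinuousLinearMap.coe_coe]
  rw [inner_adjointConjL_apply, ← ContinuousLinearMap.coe_coe, hT, ContinuousLinearMap.coe_coe,
    ← ContinuousLinearMap.adjoint_inner_right]
  rfl

theorem Continuous.adjointConjL {X : Type*} [TopologicalSpace X] {S : X → E →L[ℝ] F}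
    {T : X → F →L[ℝ] F} (hS : Continuous S) (hT : Continuous T) :
    Continuous fun x => adjointConjL (S x) (T x) :=
  (LinearIsometryEquiv.continuous _ |>.comp hS).clm_comp (hT.clm_comp hS)

theorem HasDerivAt.adjointConjL {S : ℝ → E →L[ℝ] E} {T : ℝ → E →L[ℝ] E} {S' T' : E →L[ℝ] E}
    {t : ℝ} (hS : HasDerivAt S S' t) (hT : HasDerivAt T T' t) :
    HasDerivAt (fun r => adjointConjL (S r) (T r))
      (S'† ∘L T t ∘L S t + S t† ∘L (T' ∘L S t + T t ∘L S')) t := by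
  simp_rw [adjointConjL_apply, ← ContinuousLinearMap.star_eq_adjoint]
  exact hS.star.clm_comp (hT.clm_comp hS)

end AdjointConj

section InnerIntegral

variable {α E : Type*} [MeasurableSpace α] {μ : Measure α} [NormedAddCommGroup E]
  [InnerProductSpace ℝ E] [CompleteSpace E] {F : α → E →L[ℝ] E}

theorem inner_integral_clm_apply (hF : Integrable F μ) (x y : E) :
    ⟪(∫ a, F a ∂μ) x, y⟫ = ∫ a, ⟪F a x, y⟫ ∂μ := by
  rw [ContinuousLinearMap.integral_apply hF, real_inner_comm,
    ← integral_inner (hF.apply_continuousLinearMap x)]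
  simp_rw [real_inner_comm y]

theorem isSymmetric_integral (hF : Integrable F μ) (hsym : ∀ a, (F a).IsSymmetric) :
    (∫ a, F a ∂μ).IsSymmetric := fun x y => by
  change ⟪(∫ a, F a ∂μ) x, y⟫ = ⟪x, (∫ a, F a ∂μ) y⟫
  rw [← real_inner_comm x, inner_integral_clm_apply hF, inner_integral_clm_apply hF]
  exact integral_congr_ae (ae_of_all _ fun a => (hsym a x y).trans (real_inner_comm _ _))

end InnerIntegral

section Lyapunov

variable {E : Type*} [NormedAddCommGroup E] [InnerProductSpace ℝ E] [CompleteSpace E]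
  {Φ : ℝ → ℝ → E →L[ℝ] E} {A Q : ℝ → E →L[ℝ] E}

noncomputable def lyapunovOperator (Φ : ℝ → ℝ → E →L[ℝ] E) (Q : ℝ → E →L[ℝ] E) (t : ℝ) :
    E →L[ℝ] E :=
  ∫ τ in Ioi t, adjointConjL (Φ τ t) (Q τ)

theorem integrableOn_adjointConjL_transition {K α qp t : ℝ} (hα : 0 < α) (ht : 0 ≤ t)
    (hΦ : Continuous fun τ => Φ τ t) (hQ : Continuous Q) (hQnorm : ∀ τ, ‖Q τ‖ ≤ qp)
    (hΦdecay : ∀ s t, 0 ≤ s → s ≤ t → ‖Φ t s‖ ≤ K * exp (-α * (t - s))) :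
    IntegrableOn (fun τ => adjointConjL (Φ τ t) (Q τ)) (Ioi t) := by
  refine Integrable.mono'
    ((integrableOn_exp_neg_mul_sub_Ioi t (by positivity : 0 < 2 * α)).const_mul (qp * K ^ 2))
    (hΦ.adjointConjL hQ).aestronglyMeasurable.restrict ?_
  filter_upwards [ae_restrict_mem measurableSet_Ioi] with τ hτ
  have hdecay := hΦdecay t τ ht (le_of_lt hτ)
  calc ‖adjointConjL (Φ τ t) (Q τ)‖ ≤ ‖Q τ‖ * ‖Φ τ t‖ ^ 2 := norm_adjointConjL_apply_le _ _
    _ ≤ qp * (K * exp (-α * (τ - t))) ^ 2 := by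
        gcongr; exacts [(norm_nonneg _).trans (hQnorm τ), hQnorm τ]
    _ = qp * K ^ 2 * exp (-(2 * α) * (τ - t)) := by rw [mul_pow, ← exp_nat_mul]; ring_nf

theorem lyapunovOperator_eq_adjointConjL (hΦcocycle : ∀ t s r, (Φ t s).comp (Φ s r) = Φ t r)
    {t : ℝ} (hint : IntegrableOn (fun τ => adjointConjL (Φ τ 0) (Q τ)) (Ioi t)) :
    lyapunovOperator Φ Q t = adjointConjL (Φ 0 t) (∫ τ in Ioi t, adjointConjL (Φ τ 0) (Q τ)) := by
  have hsplit : ∀ τ, adjointConjL (Φ τ t) (Q τ) =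
      adjointConjL (Φ 0 t) (adjointConjL (Φ τ 0) (Q τ)) :=
    fun τ => by rw [← adjointConjL_comp, hΦcocycle]
  simp_rw [lyapunovOperator, hsplit]
  exact (adjointConjL (Φ 0 t)).integral_comp_comm hint

theorem hasDerivAt_lyapunovOperator [FiniteDimensional ℝ E]
    (hΦid : ∀ s, Φ s s = ContinuousLinearMap.id ℝ E)
    (hΦderiv2 : ∀ τ ξ s, HasDerivAt (fun r => Φ τ r ξ) (-(Φ τ s ((A s) ξ))) s)
    (hΦcocycle : ∀ t s r, (Φ t s).comp (Φ s r) = Φ t r)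
    (hG : Continuous fun τ => adjointConjL (Φ τ 0) (Q τ))
    (hint : IntegrableOn (fun τ => adjointConjL (Φ τ 0) (Q τ)) (Ioi 0)) (t : ℝ) :
    HasDerivAt (lyapunovOperator Φ Q) (-((A t)† ∘L lyapunovOperator Φ Q t +
      lyapunovOperator Φ Q t ∘L A t + Q t)) t := by
  have hrepr := fun t => lyapunovOperator_eq_adjointConjL hΦcocycle (hint.Ioi_of_continuous hG t)
  have hΦ' : HasDerivAt (fun r => Φ 0 r) (-(Φ 0 t ∘L A t)) t :=
    hasDerivAt_clm_of_forall_apply fun ξ => by simpa using hΦderiv2 0 ξ t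
  have hQ : adjointConjL (Φ 0 t) (adjointConjL (Φ t 0) (Q t)) = Q t := by
    rw [← adjointConjL_comp, hΦcocycle, hΦid]; simp [ContinuousLinearMap.adjoint_id]
  rw [funext hrepr, ← hQ]
  beta_reduce
  convert hΦ'.adjointConjL (hasDerivAt_setIntegral_Ioi hG hint t) using 1
  simp only [adjointConjL_apply, ContinuousLinearMap.adjoint_comp, map_neg,
    ContinuousLinearMap.neg_comp, ContinuousLinearMap.comp_neg, ContinuousLinearMap.comp_add,
    ContinuousLinearMap.comp_assoc]
  abel

theorem div_mul_norm_sq_le_inner_lyapunovOperator {M qm t : ℝ} (hM : 0 < M) (hqm : 0 ≤ qm)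
    (ht : 0 ≤ t) (hAbdd : ∀ t, 0 ≤ t → ‖A t‖ ≤ M)
    (hΦid : ∀ s, Φ s s = ContinuousLinearMap.id ℝ E)
    (hΦderiv : ∀ s ξ t, HasDerivAt (fun r => Φ r s ξ) (A t (Φ t s ξ)) t)
    (hQ : ∀ τ x, qm * ‖x‖ ^ 2 ≤ ⟪x, Q τ x⟫)
    (hint : IntegrableOn (fun τ => adjointConjL (Φ τ t) (Q τ)) (Ioi t)) (x : E) :
    qm / (2 * M) * ‖x‖ ^ 2 ≤ ⟪x, lyapunovOperator Φ Q t x⟫ := by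
  rw [real_inner_comm, lyapunovOperator, inner_integral_clm_apply hint, div_mul_eq_mul_div]
  refine div_le_setIntegral_Ioi_of_mul_exp_le (by positivity)
    ((hint.apply_continuousLinearMap x).inner_const x) fun τ hτ => ?_
  have hgrowth := exp_neg_mul_mul_norm_sq_le_of_hasDerivAt (hΦderiv t x)
    (fun s hs => hAbdd s (ht.trans hs)) (le_of_lt hτ)
  rw [hΦid, ContinuousLinearMap.id_apply] at hgrowth
  calc qm * ‖x‖ ^ 2 * exp (-(2 * M) * (τ - t))
        = qm * (exp (-(2 * M) * (τ - t)) * ‖x‖ ^ 2) := by ring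
    _ ≤ qm * ‖Φ τ t x‖ ^ 2 := by gcongr
    _ ≤ ⟪adjointConjL (Φ τ t) (Q τ) x, x⟫ := by
        rw [inner_adjointConjL_apply, real_inner_comm]; exact hQ τ _

theorem inner_lyapunovOperator_le_mul {K α qp t : ℝ} (hα : 0 < α) (hqp : 0 ≤ qp) (ht : 0 ≤ t)
    (hΦdecay : ∀ s t, 0 ≤ s → s ≤ t → ‖Φ t s‖ ≤ K * exp (-α * (t - s)))
    (hQ : ∀ τ x, ⟪x, Q τ x⟫ ≤ qp * ‖x‖ ^ 2)
    (hint : IntegrableOn (fun τ => adjointConjL (Φ τ t) (Q τ)) (Ioi t)) (x : E) :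
    ⟪x, lyapunovOperator Φ Q t x⟫ ≤ K ^ 2 * qp / (2 * α) * ‖x‖ ^ 2 := by
  rw [real_inner_comm, lyapunovOperator, inner_integral_clm_apply hint, div_mul_eq_mul_div]
  refine setIntegral_Ioi_le_div_of_le_mul_exp (by positivity)
    ((hint.apply_continuousLinearMap x).inner_const x) fun τ hτ => ?_
  have hdecay : ‖Φ τ t x‖ ≤ K * exp (-α * (τ - t)) * ‖x‖ :=
    (Φ τ t).le_of_opNorm_le (hΦdecay t τ ht (le_of_lt hτ)) x
  calc ⟪adjointConjL (Φ τ t) (Q τ) x, x⟫ ≤ qp * ‖Φ τ t x‖ ^ 2 := by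
        rw [inner_adjointConjL_apply, real_inner_comm]; exact hQ τ _
    _ ≤ qp * (K * exp (-α * (τ - t)) * ‖x‖) ^ 2 := by gcongr
    _ = K ^ 2 * qp * ‖x‖ ^ 2 * exp (-(2 * α) * (τ - t)) := by
        rw [mul_pow, mul_pow, ← exp_nat_mul]; ring_nf

end Lyapunov

theorem stmt15_general (n : ℕ) (K α M qm qp : ℝ)
    (hα : 0 < α) (hM : 0 < M) (hqm : 0 < qm) (hqq : qm ≤ qp)
    (A : ℝ → (EuclideanSpace ℝ (Fin n)) →L[ℝ] (EuclideanSpace ℝ (Fin n)))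
    (hAbdd : ∀ t, 0 ≤ t → ‖A t‖ ≤ M)
    (Φ : ℝ → ℝ → ((EuclideanSpace ℝ (Fin n)) →L[ℝ] (EuclideanSpace ℝ (Fin n))))
    (hΦid : ∀ s, Φ s s = ContinuousLinearMap.id ℝ (EuclideanSpace ℝ (Fin n)))
    (hΦderiv : ∀ s ξ t, HasDerivAt (fun r => Φ r s ξ) (A t (Φ t s ξ)) t)
    (hΦderiv2 : ∀ τ ξ s, HasDerivAt (fun r => Φ τ r ξ) (-(Φ τ s ((A s) ξ))) s)
    (hΦcocycle : ∀ t s r, (Φ t s).comp (Φ s r) = Φ t r)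
    (hΦdecay : ∀ s t, 0 ≤ s → s ≤ t → ‖Φ t s‖ ≤ K * Real.exp (-α * (t - s)))
    (Q : ℝ → (EuclideanSpace ℝ (Fin n)) →L[ℝ] (EuclideanSpace ℝ (Fin n)))
    (hQcont : Continuous Q)
    (hQsym : ∀ t (x z : (EuclideanSpace ℝ (Fin n))), (inner ℝ (Q t x) z : ℝ) = inner ℝ x (Q t z))
    (hQbounds : ∀ t (x : (EuclideanSpace ℝ (Fin n))),
      qm * ‖x‖ ^ 2 ≤ (inner ℝ x (Q t x) : ℝ) ∧ (inner ℝ x (Q t x) : ℝ) ≤ qp * ‖x‖ ^ 2) :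
    let P : ℝ → ((EuclideanSpace ℝ (Fin n)) →L[ℝ] (EuclideanSpace ℝ (Fin n))) := fun t =>
      ∫ τ in Set.Ioi t, (ContinuousLinearMap.adjoint (Φ τ t)).comp ((Q τ).comp (Φ τ t))
    (∀ t, 0 ≤ t → MeasureTheory.IntegrableOn
        (fun τ => (ContinuousLinearMap.adjoint (Φ τ t)).comp ((Q τ).comp (Φ τ t)))
        (Set.Ioi t)) ∧
    (∀ t, 0 ≤ t → ∀ x z : (EuclideanSpace ℝ (Fin n)), (inner ℝ (P t x) z : ℝ) = inner ℝ x (P t z)) ∧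
    (∀ t, 0 ≤ t → ∀ x : (EuclideanSpace ℝ (Fin n)),
      (qm / (2 * M)) * ‖x‖ ^ 2 ≤ (inner ℝ x (P t x) : ℝ) ∧
      (inner ℝ x (P t x) : ℝ) ≤ (K ^ 2 * qp / (2 * α)) * ‖x‖ ^ 2) ∧
    (∀ t, 0 ≤ t → HasDerivAt P
      (-((ContinuousLinearMap.adjoint (A t)).comp (P t) + (P t).comp (A t) + Q t)) t) := by
  intro P
  have hqp : 0 ≤ qp := hqm.le.trans hqq
  have hQnorm : ∀ τ, ‖Q τ‖ ≤ qp := fun τ =>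
    (Q τ).norm_le_of_abs_inner_self_le (hQsym τ) hqp fun x => by
      rw [real_inner_comm]
      exact abs_le.2 ⟨by nlinarith [hQbounds τ x, sq_nonneg ‖x‖], (hQbounds τ x).2⟩
  have hΦcont : ∀ s, Continuous fun τ => Φ τ s := fun s => continuous_clm_apply.2 fun ξ =>
    continuous_iff_continuousAt.2 fun τ => (hΦderiv s ξ τ).continuousAt
  have hint : ∀ t, 0 ≤ t → IntegrableOn (fun τ => adjointConjL (Φ τ t) (Q τ)) (Ioi t) :=
    fun t ht => integrableOn_adjointConjL_transition hα ht (hΦcont t) hQcont hQnorm hΦdecay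
  refine ⟨hint, fun t ht => ?_, fun t ht x => ⟨?_, ?_⟩, fun t _ => ?_⟩
  · exact isSymmetric_integral (hint t ht) fun τ => isSymmetric_adjointConjL _ (hQsym τ)
  · exact div_mul_norm_sq_le_inner_lyapunovOperator hM hqm.le ht hAbdd hΦid hΦderiv
      (fun τ x => (hQbounds τ x).1) (hint t ht) x
  · exact inner_lyapunovOperator_le_mul hα hqp ht hΦdecay (fun τ x => (hQbounds τ x).2)
      (hint t ht) x
  · exact hasDerivAt_lyapunovOperator hΦid hΦderiv2 hΦcocycle ((hΦcont 0).adjointConjL hQcont)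
      (hint 0 le_rfl) t

theorem stmt15 (n : ℕ) (K α M qm qp : ℝ)
    (hK : 1 ≤ K) (hα : 0 < α) (hM : 0 < M) (hqm : 0 < qm) (hqq : qm ≤ qp)
    (A : ℝ → (EuclideanSpace ℝ (Fin n)) →L[ℝ] (EuclideanSpace ℝ (Fin n)))
    (hAcont : Continuous A) (hAbdd : ∀ t, 0 ≤ t → ‖A t‖ ≤ M)
    (Φ : ℝ → ℝ → ((EuclideanSpace ℝ (Fin n)) →L[ℝ] (EuclideanSpace ℝ (Fin n))))
    (hΦid : ∀ s, Φ s s = ContinuousLinearMap.id ℝ (EuclideanSpace ℝ (Fin n)))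
    (hΦderiv : ∀ s ξ t, HasDerivAt (fun r => Φ r s ξ) (A t (Φ t s ξ)) t)
    (hΦderiv2 : ∀ τ ξ s, HasDerivAt (fun r => Φ τ r ξ) (-(Φ τ s ((A s) ξ))) s)
    (hΦcocycle : ∀ t s r, (Φ t s).comp (Φ s r) = Φ t r)
    (hΦdecay : ∀ s t, 0 ≤ s → s ≤ t → ‖Φ t s‖ ≤ K * Real.exp (-α * (t - s)))
    (Q : ℝ → (EuclideanSpace ℝ (Fin n)) →L[ℝ] (EuclideanSpace ℝ (Fin n)))
    (hQcont : Continuous Q)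
    (hQsym : ∀ t (x z : (EuclideanSpace ℝ (Fin n))), (inner ℝ (Q t x) z : ℝ) = inner ℝ x (Q t z))
    (hQbounds : ∀ t (x : (EuclideanSpace ℝ (Fin n))),
      qm * ‖x‖ ^ 2 ≤ (inner ℝ x (Q t x) : ℝ) ∧ (inner ℝ x (Q t x) : ℝ) ≤ qp * ‖x‖ ^ 2) :
    let P : ℝ → ((EuclideanSpace ℝ (Fin n)) →L[ℝ] (EuclideanSpace ℝ (Fin n))) := fun t =>
      ∫ τ in Set.Ioi t, (ContinuousLinearMap.adjoint (Φ τ t)).comp ((Q τ).comp (Φ τ t))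
    (∀ t, 0 ≤ t → MeasureTheory.IntegrableOn
        (fun τ => (ContinuousLinearMap.adjoint (Φ τ t)).comp ((Q τ).comp (Φ τ t)))
        (Set.Ioi t)) ∧
    (∀ t, 0 ≤ t → ∀ x z : (EuclideanSpace ℝ (Fin n)), (inner ℝ (P t x) z : ℝ) = inner ℝ x (P t z)) ∧
    (∀ t, 0 ≤ t → ∀ x : (EuclideanSpace ℝ (Fin n)),
      (qm / (2 * M)) * ‖x‖ ^ 2 ≤ (inner ℝ x (P t x) : ℝ) ∧
      (inner ℝ x (P t x) : ℝ) ≤ (K ^ 2 * qp / (2 * α)) * ‖x‖ ^ 2) ∧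
    (∀ t, 0 ≤ t → HasDerivAt P
      (-((ContinuousLinearMap.adjoint (A t)).comp (P t) + (P t).comp (A t) + Q t)) t) :=
  stmt15_general n K α M qm qp hα hM hqm hqq A hAbdd Φ hΦid hΦderiv hΦderiv2 hΦcocycle hΦdecay Q
    hQcont hQsym hQbounds
end

section
/- Under hypotheses (P1)–(P3) with f(t,·) of class C¹ and Kγ/α < 1, for each fixed t ≥ 0 the map η ↦ G(t,η) = η − ∫₀ᵗ Φ(t,s) f(s, y(s,t,η)) ds is C¹ and its Jacobian matrix equals ∂G/∂η (t,η) = Φ(t,0) · ∂y(0,t,η)/∂η, where ∂y(0,t,η)/∂η is the solution at time 0 of the variational equation along y(·,t,η). In particular the Jacobian determinant is positive for every (t,η). -/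
/-!
Variation of constants rewrites `G(t, η)` as `Φ(t, 0) y(0, t, η)`, so the chain rule gives the
Jacobian. Grönwall's inequality, run backwards from time `t` on the variational equation, bounds
`∂y/∂η`; hence trajectories depend Lipschitz-continuously on `η`, the coefficients `A + Df` of the
variational equation converge uniformly in time as `η → η₀`, and a second backward Grönwall
estimate gives continuity of `η ↦ ∂y(0, t, η)/∂η`. Finally `Φ(·, 0)` (by the cocycle property) and
`∂y(·, t, η)/∂η` (by uniqueness for the linear variational equation) stay invertible, so their
determinants, continuous in time and equal to `1` at one time, are positive.
-/

open Real MeasureTheory Filter Topology Set ContinuousLinearMap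

variable {E F : Type*} [NormedAddCommGroup E] [NormedSpace ℝ E] [NormedAddCommGroup F]
  [NormedSpace ℝ F]

theorem hasDerivAt_of_forall_hasDerivAt_apply [FiniteDimensional ℝ E] {X : ℝ → E →L[ℝ] F}
    {X' : E →L[ℝ] F} {s : ℝ} (h : ∀ v, HasDerivAt (fun r => X r v) (X' v) s) :
    HasDerivAt X X' s := by
  let b := Module.finBasis ℝ E
  let e : (E →L[ℝ] F) ≃L[ℝ] (Fin (Module.finrank ℝ E) → F) :=
    (b.equivFun.toContinuousLinearEquiv.arrowCongr (ContinuousLinearEquiv.refl ℝ F)).trans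
      (ContinuousLinearEquiv.piRing _)
  have hb : ∀ T i, e T i = T (b i) := fun T i => by
    simp [e, ContinuousLinearEquiv.piRing, ContinuousLinearEquiv.arrowCongr]
  have he : HasDerivAt (fun r => e (X r)) (e X') s :=
    hasDerivAt_pi.2 fun i => by simpa only [hb] using h (b i)
  simpa [Function.comp_def] using e.symm.hasFDerivAt.comp_hasDerivAt s he

theorem HasDerivAt.inverse_of_mul_eq_one {R : Type*} [NormedRing R] [NormedAlgebra ℝ R]
    [HasSummableGeomSeries R] {X Y : ℝ → R} {X' : R} {s : ℝ} (hX : HasDerivAt X X' s)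
    (hXY : ∀ r, X r * Y r = 1) (hYX : ∀ r, Y r * X r = 1) :
    HasDerivAt Y (-(Y s * X' * Y s)) s := by
  let u : ℝ → Rˣ := fun r => ⟨X r, Y r, hXY r, hYX r⟩
  have hY : Ring.inverse ∘ X = Y := funext fun r => Ring.inverse_unit (u r)
  simpa [hY, u] using (hasFDerivAt_ringInverse (u s)).comp_hasDerivAt s hX

theorem IsPreconnected.pos_of_ne_zero {α : Type*} [TopologicalSpace α] {S : Set α}
    (hS : IsPreconnected S) {g : α → ℝ} (hg : ContinuousOn g S) (hg0 : ∀ x ∈ S, g x ≠ 0)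
    {x₀ : α} (hx₀ : x₀ ∈ S) (hpos : 0 < g x₀) : ∀ x ∈ S, 0 < g x := by
  intro x hx
  by_contra! hneg
  obtain ⟨z, hz, hz0⟩ := hS.intermediate_value hx hx₀ hg ⟨hneg, hpos.le⟩
  exact hg0 z hz hz0

theorem norm_le_gronwallBound_of_norm_deriv_le_backward {u u' : ℝ → E} {K ε a b : ℝ}
    (hu : ∀ s ∈ Icc a b, HasDerivAt u (u' s) s)
    (bound : ∀ s ∈ Icc a b, ‖u' s‖ ≤ K * ‖u s‖ + ε) :
    ∀ s ∈ Icc a b, ‖u s‖ ≤ gronwallBound ‖u b‖ K ε (b - s) := by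
  intro s hs
  have hmem : ∀ r ∈ Icc 0 (b - a), b - r ∈ Icc a b := fun r hr =>
    ⟨by linarith [hr.2], by linarith [hr.1]⟩
  have hrev : ∀ r ∈ Icc 0 (b - a), HasDerivAt (fun r => u (b - r)) (-u' (b - r)) r :=
    fun r hr => by
      simpa [Function.comp_def] using (hu _ (hmem r hr)).scomp r ((hasDerivAt_id r).const_sub b)
  simpa using norm_le_gronwallBound_of_norm_deriv_right_le (f := fun r => u (b - r))
    (fun r hr => (hrev r hr).continuousAt.continuousWithinAt)
    (fun r hr => (hrev r (Ico_subset_Icc_self hr)).hasDerivWithinAt) (by simp)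
    (fun r hr => by simpa using bound _ (hmem r (Ico_subset_Icc_self hr))) (b - s)
    ⟨by linarith [hs.2], by linarith [hs.1]⟩

section LinearODE

variable {X Y : ℝ → E →L[ℝ] F} {B C : ℝ → F →L[ℝ] F} {L a b : ℝ}

theorem norm_le_of_linear_ode (hX : ∀ s ∈ Icc a b, HasDerivAt X ((B s).comp (X s)) s)
    (hB : ∀ s ∈ Icc a b, ‖B s‖ ≤ L) : ∀ s ∈ Icc a b, ‖X s‖ ≤ ‖X b‖ * exp (L * (b - s)) := by
  intro s hs
  have bound : ∀ r ∈ Icc a b, ‖(B r).comp (X r)‖ ≤ L * ‖X r‖ + 0 := fun r hr => by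
    rw [add_zero]
    exact (opNorm_comp_le _ _).trans (mul_le_mul_of_nonneg_right (hB r hr) (norm_nonneg _))
  simpa [gronwallBound_ε0] using norm_le_gronwallBound_of_norm_deriv_le_backward hX bound s hs

theorem norm_sub_le_of_linear_ode {c δ : ℝ} (hX : ∀ s ∈ Icc a b, HasDerivAt X ((B s).comp (X s)) s)
    (hY : ∀ s ∈ Icc a b, HasDerivAt Y ((C s).comp (Y s)) s) (hB : ∀ s ∈ Icc a b, ‖B s‖ ≤ L)
    (hYc : ∀ s ∈ Icc a b, ‖Y s‖ ≤ c) (hBC : ∀ s ∈ Icc a b, ‖B s - C s‖ ≤ δ) (hXY : X b = Y b) :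
    ∀ s ∈ Icc a b, ‖X s - Y s‖ ≤ gronwallBound 0 L (δ * c) (b - s) := by
  have bound : ∀ s ∈ Icc a b,
      ‖(B s).comp (X s) - (C s).comp (Y s)‖ ≤ L * ‖(X - Y) s‖ + δ * c := fun s hs => by
    have hδ : 0 ≤ δ := (norm_nonneg _).trans (hBC s hs)
    calc ‖(B s).comp (X s) - (C s).comp (Y s)‖
        = ‖(B s).comp (X s - Y s) + (B s - C s).comp (Y s)‖ := by
          rw [comp_sub, sub_comp]; abel_nf
      _ ≤ ‖B s‖ * ‖X s - Y s‖ + ‖B s - C s‖ * ‖Y s‖ :=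
          norm_add_le_of_le (opNorm_comp_le _ _) (opNorm_comp_le _ _)
      _ ≤ L * ‖(X - Y) s‖ + δ * c :=
          add_le_add (mul_le_mul_of_nonneg_right (hB s hs) (norm_nonneg _))
            (mul_le_mul (hBC s hs) (hYc s hs) (norm_nonneg _) hδ)
  simpa [hXY] using norm_le_gronwallBound_of_norm_deriv_le_backward
    (fun s hs => (hX s hs).sub (hY s hs)) bound

theorem det_ne_zero_of_linear_ode [FiniteDimensional ℝ E] {X B : ℝ → E →L[ℝ] E}
    (hX : ∀ s ∈ Icc a b, HasDerivAt X ((B s).comp (X s)) s) (hB : ∀ s ∈ Icc a b, ‖B s‖ ≤ L)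
    (hXb : Function.Injective (X b)) : ∀ s ∈ Icc a b, LinearMap.det (X s : E →ₗ[ℝ] E) ≠ 0 := by
  intro s hs
  rw [Ne, LinearMap.det_eq_zero_iff_ker_ne_bot, not_not, LinearMap.ker_eq_bot']
  intro v hv
  have hsub : Icc s b ⊆ Icc a b := Icc_subset_Icc_left hs.1
  have hderiv : ∀ r ∈ Icc s b, HasDerivAt (fun r => X r v) (B r (X r v)) r := fun r hr => by
    simpa using (hX r (hsub hr)).clm_apply (hasDerivAt_const r v)
  have hvb := eq_zero_of_abs_deriv_le_mul_abs_self_of_eq_zero_right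
    (fun r hr => (hderiv r hr).continuousAt.continuousWithinAt)
    (fun r hr => (hderiv r (Ico_subset_Icc_self hr)).hasDerivWithinAt) hv
    (fun r hr => (le_opNorm _ _).trans
      (mul_le_mul_of_nonneg_right (hB r (hsub (Ico_subset_Icc_self hr))) (norm_nonneg _)))
    b ⟨hs.2, le_rfl⟩
  exact hXb (hvb.trans (map_zero _).symm)

theorem det_pos_of_linear_ode [FiniteDimensional ℝ E] {X B : ℝ → E →L[ℝ] E}
    (hX : ∀ s ∈ Icc a b, HasDerivAt X ((B s).comp (X s)) s) (hB : ∀ s ∈ Icc a b, ‖B s‖ ≤ L)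
    (hXb : X b = ContinuousLinearMap.id ℝ E) :
    ∀ s ∈ Icc a b, 0 < LinearMap.det (X s : E →ₗ[ℝ] E) := by
  intro s hs
  refine isPreconnected_Icc.pos_of_ne_zero
    (fun r hr => (continuous_det.continuousAt.comp (hX r hr).continuousAt).continuousWithinAt)
    (det_ne_zero_of_linear_ode hX hB (by rw [hXb]; exact Function.injective_id))
    ⟨hs.1.trans hs.2, le_rfl⟩ (by simp [hXb, ContinuousLinearMap.det]) s hs

theorem tendsto_of_linear_ode {ι : Type*} {l : Filter ι} {X : ι → ℝ → E →L[ℝ] F}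
    {B : ι → ℝ → F →L[ℝ] F} {X₀ : ℝ → E →L[ℝ] F} {B₀ : ℝ → F →L[ℝ] F} (hab : a ≤ b)
    (hX : ∀ i, ∀ s ∈ Icc a b, HasDerivAt (X i) ((B i s).comp (X i s)) s)
    (hX₀ : ∀ s ∈ Icc a b, HasDerivAt X₀ ((B₀ s).comp (X₀ s)) s)
    (hB : ∀ i, ∀ s ∈ Icc a b, ‖B i s‖ ≤ L) (hBB₀ : TendstoUniformlyOn B B₀ l (Icc a b))
    (hXb : ∀ i, X i b = X₀ b) : Tendsto (fun i => X i a) l (𝓝 (X₀ a)) := by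
  obtain ⟨c, hc⟩ := isCompact_Icc.exists_bound_of_continuousOn fun s hs =>
    (hX₀ s hs).continuousAt.continuousWithinAt
  have hg : Tendsto (fun δ => gronwallBound 0 L (δ * c) (b - a)) (𝓝 0) (𝓝 0) := by
    simpa [Function.comp_def, gronwallBound_ε0_δ0] using
      ((gronwallBound_continuous_ε 0 L (b - a)).comp (continuous_mul_const c)).tendsto 0
  rw [Metric.tendsto_nhds]
  intro ε hε
  obtain ⟨δ, hδε, hδ⟩ := (((hg.eventually (gt_mem_nhds hε)).filter_mono nhdsWithin_le_nhds).and
    (self_mem_nhdsWithin (s := Ioi (0 : ℝ)))).exists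
  filter_upwards [Metric.tendstoUniformlyOn_iff.1 hBB₀ δ hδ] with i hi
  rw [dist_eq_norm]
  refine (norm_sub_le_of_linear_ode (hX i) hX₀ (hB i) hc (fun s hs => ?_) (hXb i) a
    ⟨le_rfl, hab⟩).trans_lt hδε
  rw [← dist_eq_norm, dist_comm]
  exact (hi s hs).le

end LinearODE

structure IsEvolutionFamily (A : ℝ → E →L[ℝ] E) (Φ : ℝ → ℝ → E →L[ℝ] E) : Prop where
  apply_self : ∀ s, Φ s s = ContinuousLinearMap.id ℝ E
  hasDerivAt_apply : ∀ s ξ t, HasDerivAt (fun r => Φ r s ξ) (A t (Φ t s ξ)) t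
  comp_eq : ∀ t s r, (Φ t s).comp (Φ s r) = Φ t r

namespace IsEvolutionFamily

variable {A : ℝ → E →L[ℝ] E} {Φ : ℝ → ℝ → E →L[ℝ] E}

theorem mul_eq_one (hΦ : IsEvolutionFamily A Φ) (t s : ℝ) : Φ t s * Φ s t = 1 := by
  rw [mul_def, hΦ.comp_eq, hΦ.apply_self, one_def]

theorem hasDerivAt_left [FiniteDimensional ℝ E] (hΦ : IsEvolutionFamily A Φ) (s t : ℝ) :
    HasDerivAt (fun r => Φ r s) ((A t).comp (Φ t s)) t :=
  hasDerivAt_of_forall_hasDerivAt_apply fun ξ => hΦ.hasDerivAt_apply s ξ t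

theorem hasDerivAt_right [FiniteDimensional ℝ E] (hΦ : IsEvolutionFamily A Φ) (t s : ℝ) :
    HasDerivAt (fun r => Φ t r) (-((Φ t s).comp (A s))) s := by
  have h := (hΦ.hasDerivAt_left t s).inverse_of_mul_eq_one (fun r => hΦ.mul_eq_one r t)
    (fun r => hΦ.mul_eq_one t r)
  rwa [← mul_def, mul_assoc, mul_assoc, hΦ.mul_eq_one, mul_one, mul_def] at h

theorem det_pos [FiniteDimensional ℝ E] (hΦ : IsEvolutionFamily A Φ) (t s : ℝ) :
    0 < LinearMap.det (Φ t s : E →ₗ[ℝ] E) := by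
  have hne : ∀ r ∈ univ, LinearMap.det (Φ r s : E →ₗ[ℝ] E) ≠ 0 := fun r _ h0 => by
    have h : LinearMap.det (Φ r s : E →ₗ[ℝ] E) * LinearMap.det (Φ s r : E →ₗ[ℝ] E) = 1 := by
      rw [← LinearMap.det_comp, ← toLinearMap_comp, hΦ.comp_eq, hΦ.apply_self, coe_id,
        LinearMap.det_id]
    rw [h0, zero_mul] at h
    exact zero_ne_one h
  exact isPreconnected_univ.pos_of_ne_zero
    (continuous_det.comp (continuous_iff_continuousAt.2 fun r =>
      (hΦ.hasDerivAt_left s r).continuousAt)).continuousOn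
    hne (mem_univ s) (by simp [hΦ.apply_self, ContinuousLinearMap.det]) t (mem_univ t)

theorem integral_apply_eq_sub [FiniteDimensional ℝ E] (hΦ : IsEvolutionFamily A Φ) {z g : ℝ → E}
    {a b : ℝ} (hab : a ≤ b)
    (hz : ∀ s ∈ Icc a b, HasDerivAt z (A s (z s) + g s) s) (hg : ContinuousOn g (Icc a b)) :
    ∫ s in a..b, Φ b s (g s) = z b - Φ b a (z a) := by
  have hderiv : ∀ s ∈ uIcc a b, HasDerivAt (fun r => Φ b r (z r)) (Φ b s (g s)) s := by
    intro s hs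
    rw [uIcc_of_le hab] at hs
    convert (hΦ.hasDerivAt_right b s).clm_apply (hz s hs) using 1
    simp
  have hcont : ContinuousOn (fun s => Φ b s (g s)) (uIcc a b) := by
    rw [uIcc_of_le hab]
    exact (continuous_iff_continuousAt.2 fun r =>
      (hΦ.hasDerivAt_right b r).continuousAt).continuousOn.clm_apply hg
  rw [intervalIntegral.integral_eq_sub_of_hasDerivAt hderiv hcont.intervalIntegrable,
    hΦ.apply_self]
  rfl

end IsEvolutionFamily

theorem continuous_of_variational_equation {V : ℝ → E → E →L[ℝ] E} {y : E → ℝ → E}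
    {Dy : E → ℝ → E →L[ℝ] E} {L a b : ℝ} (hab : a ≤ b)
    (hV : ContinuousOn (fun p : ℝ × E => V p.1 p.2) (Icc a b ×ˢ univ))
    (hVL : ∀ s ∈ Icc a b, ∀ x, ‖V s x‖ ≤ L) (hy : ∀ η, ContinuousOn (y η) (Icc a b))
    (hDy : ∀ η, ∀ s ∈ Icc a b, HasFDerivAt (fun ζ => y ζ s) (Dy η s) η)
    (hDyode : ∀ η, ∀ s ∈ Icc a b, HasDerivAt (Dy η) ((V s (y η s)).comp (Dy η s)) s)
    (hDyb : ∀ η, Dy η b = ContinuousLinearMap.id ℝ E) :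
    Continuous fun η => Dy η a := by
  have hL : 0 ≤ L := (norm_nonneg _).trans (hVL a ⟨le_rfl, hab⟩ 0)
  set C := ‖ContinuousLinearMap.id ℝ E‖ * exp (L * (b - a))
  have hDy_le : ∀ η, ∀ s ∈ Icc a b, ‖Dy η s‖ ≤ C := fun η s hs => by
    refine (norm_le_of_linear_ode (hDyode η) (fun r hr => hVL r hr _) s hs).trans ?_
    rw [hDyb]
    exact mul_le_mul_of_nonneg_left
      (exp_le_exp.2 (mul_le_mul_of_nonneg_left (by linarith [hs.1]) hL)) (norm_nonneg _)
  have hlip : ∀ s ∈ Icc a b, LipschitzOnWith C.toNNReal (fun η => y η s) univ := fun s hs =>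
    convex_univ.lipschitzOnWith_of_nnnorm_hasFDerivWithin_le
      (fun η _ => (hDy η s hs).hasFDerivWithinAt)
      fun η _ => NNReal.le_toNNReal_of_coe_le (hDy_le η s hs)
  have hVy : ContinuousOn (Function.uncurry fun η s => V s (y η s)) (univ ×ˢ Icc a b) := by
    have hyj : ContinuousOn (fun p : ℝ × E => y p.2 p.1) (Icc a b ×ˢ univ) :=
      continuousOn_prod_of_continuousOn_lipschitzOnWith' _ _ hlip fun η _ => hy η
    exact (hV.comp (continuousOn_fst.prodMk hyj) fun p hp => ⟨hp.1, mem_univ _⟩).comp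
      continuous_swap.continuousOn fun p hp => ⟨hp.2, hp.1⟩
  refine continuous_iff_continuousAt.2 fun η₀ => tendsto_of_linear_ode hab hDyode (hDyode η₀)
    (fun η s hs => hVL s hs _) ?_ fun η => (hDyb η).trans (hDyb η₀).symm
  rw [Metric.tendstoUniformlyOn_iff]
  intro ε hε
  obtain ⟨v, hv, hvε⟩ := isCompact_Icc.mem_uniformity_of_prod hVy (mem_univ η₀)
    (Metric.dist_mem_uniformity hε)
  rw [nhdsWithin_univ] at hv
  filter_upwards [hv] with η hη s hs
  rw [dist_comm]
  exact hvε η hη s hs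

theorem stmt17_general (n : ℕ) (γ M : ℝ)
    (hγ : 0 < γ)
    (A : ℝ → (EuclideanSpace ℝ (Fin n)) →L[ℝ] (EuclideanSpace ℝ (Fin n)))
    (hAcont : Continuous A) (hAbdd : ∀ t, 0 ≤ t → ‖A t‖ ≤ M)
    (Φ : ℝ → ℝ → ((EuclideanSpace ℝ (Fin n)) →L[ℝ] (EuclideanSpace ℝ (Fin n))))
    (hΦid : ∀ s, Φ s s = ContinuousLinearMap.id ℝ (EuclideanSpace ℝ (Fin n)))
    (hΦderiv : ∀ s ξ t, HasDerivAt (fun r => Φ r s ξ) (A t (Φ t s ξ)) t)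
    (hΦcocycle : ∀ t s r, (Φ t s).comp (Φ s r) = Φ t r)
    (f : ℝ → (EuclideanSpace ℝ (Fin n)) → (EuclideanSpace ℝ (Fin n)))
    (hfcont : Continuous fun p : ℝ × (EuclideanSpace ℝ (Fin n)) => f p.1 p.2)
    (hflip : ∀ t u v, 0 ≤ t → ‖f t u - f t v‖ ≤ γ * ‖u - v‖)
    (y : ℝ → (EuclideanSpace ℝ (Fin n)) → ℝ → (EuclideanSpace ℝ (Fin n)))
    (hyinit : ∀ τ η, y τ η τ = η)
    (hyderiv : ∀ τ η t, 0 ≤ t → HasDerivAt (y τ η) (A t (y τ η t) + f t (y τ η t)) t)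
    (Df : ℝ → (EuclideanSpace ℝ (Fin n)) → ((EuclideanSpace ℝ (Fin n)) →L[ℝ] (EuclideanSpace ℝ (Fin n))))
    (hDf : ∀ t x, 0 ≤ t → HasFDerivAt (f t) (Df t x) x)
    (hDfcont : Continuous fun p : ℝ × (EuclideanSpace ℝ (Fin n)) => Df p.1 p.2)
    (Dy : ℝ → (EuclideanSpace ℝ (Fin n)) → ℝ → ((EuclideanSpace ℝ (Fin n)) →L[ℝ] (EuclideanSpace ℝ (Fin n))))
    (hDyinit : ∀ τ η, Dy τ η τ = ContinuousLinearMap.id ℝ (EuclideanSpace ℝ (Fin n)))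
    (hDyode : ∀ τ η s, 0 ≤ s →
      HasDerivAt (Dy τ η) ((A s + Df s (y τ η s)).comp (Dy τ η s)) s)
    (hDy : ∀ τ η s, HasFDerivAt (fun ζ => y τ ζ s) (Dy τ η s) η) :
    ∀ t, 0 ≤ t →
      (∀ η : (EuclideanSpace ℝ (Fin n)), HasFDerivAt (fun ζ : (EuclideanSpace ℝ (Fin n)) => ζ - ∫ s in (0:ℝ)..t, Φ t s (f s (y t ζ s)))
          ((Φ t 0).comp (Dy t η 0)) η) ∧
      (Continuous fun η : (EuclideanSpace ℝ (Fin n)) => (Φ t 0).comp (Dy t η 0)) ∧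
      (∀ η : (EuclideanSpace ℝ (Fin n)), 0 < LinearMap.det ((Φ t 0).comp (Dy t η 0)).toLinearMap) := by
  intro t ht
  have hΦ : IsEvolutionFamily A Φ := ⟨hΦid, hΦderiv, hΦcocycle⟩
  have hV : ∀ s ∈ Icc 0 t, ∀ x, ‖A s + Df s x‖ ≤ M + γ := fun s hs x => by
    have hlip : LipschitzWith γ.toNNReal (f s) := LipschitzWith.of_dist_le_mul fun u v => by
      simpa [dist_eq_norm, Real.coe_toNNReal γ hγ.le] using hflip s u v hs.1
    refine (norm_add_le _ _).trans (add_le_add (hAbdd s hs.1) ?_)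
    simpa [Real.coe_toNNReal γ hγ.le] using (hDf s x hs.1).le_of_lipschitz hlip
  have hy : ∀ ζ, ∀ s ∈ Icc 0 t, HasDerivAt (y t ζ) (A s (y t ζ s) + f s (y t ζ s)) s :=
    fun ζ s hs => hyderiv t ζ s hs.1
  have hycont : ∀ ζ, ContinuousOn (y t ζ) (Icc 0 t) := fun ζ s hs =>
    (hy ζ s hs).continuousAt.continuousWithinAt
  have hDyode' : ∀ η, ∀ s ∈ Icc 0 t,
      HasDerivAt (Dy t η) ((A s + Df s (y t η s)).comp (Dy t η s)) s :=
    fun η s hs => hDyode t η s hs.1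
  have hG : (fun ζ => ζ - ∫ s in (0:ℝ)..t, Φ t s (f s (y t ζ s))) = fun ζ => Φ t 0 (y t ζ 0) := by
    funext ζ
    rw [hΦ.integral_apply_eq_sub ht (hy ζ)
      (hfcont.comp_continuousOn (continuousOn_id.prodMk (hycont ζ))), hyinit, sub_sub_cancel]
  refine ⟨fun η => ?_, ?_, fun η => ?_⟩
  · rw [hG]
    exact (Φ t 0).hasFDerivAt.comp η (hDy t η 0)
  · exact continuous_const.clm_comp (continuous_of_variational_equation ht
      ((hAcont.comp continuous_fst).add hDfcont).continuousOn hV hycont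
      (fun η s _ => hDy t η s) hDyode' (hDyinit t))
  · rw [toLinearMap_comp, LinearMap.det_comp]
    exact mul_pos (hΦ.det_pos t 0)
      (det_pos_of_linear_ode (hDyode' η) (fun s hs => hV s hs _) (hDyinit t η) 0 ⟨le_rfl, ht⟩)

theorem stmt17 (n : ℕ) (K α γ μ M : ℝ)
    (hK : 1 ≤ K) (hα : 0 < α) (hγ : 0 < γ) (hμ : 0 < μ) (hM : 0 < M)
    (A : ℝ → (EuclideanSpace ℝ (Fin n)) →L[ℝ] (EuclideanSpace ℝ (Fin n)))
    (hAcont : Continuous A) (hAbdd : ∀ t, 0 ≤ t → ‖A t‖ ≤ M)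
    (Φ : ℝ → ℝ → ((EuclideanSpace ℝ (Fin n)) →L[ℝ] (EuclideanSpace ℝ (Fin n))))
    (hΦid : ∀ s, Φ s s = ContinuousLinearMap.id ℝ (EuclideanSpace ℝ (Fin n)))
    (hΦderiv : ∀ s ξ t, HasDerivAt (fun r => Φ r s ξ) (A t (Φ t s ξ)) t)
    (hΦcocycle : ∀ t s r, (Φ t s).comp (Φ s r) = Φ t r)
    (hΦdecay : ∀ s t, 0 ≤ s → s ≤ t → ‖Φ t s‖ ≤ K * Real.exp (-α * (t - s)))
    (f : ℝ → (EuclideanSpace ℝ (Fin n)) → (EuclideanSpace ℝ (Fin n)))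
    (hfcont : Continuous fun p : ℝ × (EuclideanSpace ℝ (Fin n)) => f p.1 p.2)
    (hflip : ∀ t u v, 0 ≤ t → ‖f t u - f t v‖ ≤ γ * ‖u - v‖)
    (hfbdd : ∀ t u, 0 ≤ t → ‖f t u‖ ≤ μ)
    (hsmall : K * γ / α < 1)
    (y : ℝ → (EuclideanSpace ℝ (Fin n)) → ℝ → (EuclideanSpace ℝ (Fin n)))
    (hyinit : ∀ τ η, y τ η τ = η)
    (hyderiv : ∀ τ η t, 0 ≤ t → HasDerivAt (y τ η) (A t (y τ η t) + f t (y τ η t)) t)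
    (Df : ℝ → (EuclideanSpace ℝ (Fin n)) → ((EuclideanSpace ℝ (Fin n)) →L[ℝ] (EuclideanSpace ℝ (Fin n))))
    (hDf : ∀ t x, 0 ≤ t → HasFDerivAt (f t) (Df t x) x)
    (hDfcont : Continuous fun p : ℝ × (EuclideanSpace ℝ (Fin n)) => Df p.1 p.2)
    (Dy : ℝ → (EuclideanSpace ℝ (Fin n)) → ℝ → ((EuclideanSpace ℝ (Fin n)) →L[ℝ] (EuclideanSpace ℝ (Fin n))))
    (hDyinit : ∀ τ η, Dy τ η τ = ContinuousLinearMap.id ℝ (EuclideanSpace ℝ (Fin n)))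
    (hDyode : ∀ τ η s, 0 ≤ s →
      HasDerivAt (Dy τ η) ((A s + Df s (y τ η s)).comp (Dy τ η s)) s)
    (hDy : ∀ τ η s, HasFDerivAt (fun ζ => y τ ζ s) (Dy τ η s) η) :
    ∀ t, 0 ≤ t →
      (∀ η : (EuclideanSpace ℝ (Fin n)), HasFDerivAt (fun ζ : (EuclideanSpace ℝ (Fin n)) => ζ - ∫ s in (0:ℝ)..t, Φ t s (f s (y t ζ s)))
          ((Φ t 0).comp (Dy t η 0)) η) ∧
      (Continuous fun η : (EuclideanSpace ℝ (Fin n)) => (Φ t 0).comp (Dy t η 0)) ∧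
      (∀ η : (EuclideanSpace ℝ (Fin n)), 0 < LinearMap.det ((Φ t 0).comp (Dy t η 0)).toLinearMap) :=
  stmt17_general n γ M hγ A hAcont hAbdd Φ hΦid hΦderiv hΦcocycle f hfcont hflip y hyinit hyderiv Df
    hDf hDfcont Dy hDyinit hDyode hDy
end
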